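/- For every nonnegative integer k and every nonnegative integer n, pl̄_{2k+1}(2n+1) ≡ p̄(2n+1) (mod 4), where pl̄_{2k+1} counts plane overpartitions with at most 2k+1 rows and p̄ counts overpartitions. -/

import Mathlib

open PowerSeries

/-- The formal power series `(1+q^k)/(1-q^k)` in `ℤ⟦q⟧`. -/
noncomputable def fps (k : ℕ) : PowerSeries ℤ :=
  (1 + (PowerSeries.X : PowerSeries ℤ) ^ k) *
    PowerSeries.invOfUnit (1 - (PowerSeries.X : PowerSeries ℤ) ^ k) 1

/-- The number of overpartitions of `n`: the coefficient of `q^n` in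
`∏_{k≥1} (1+q^k)/(1-q^k)`.  Since each factor with `k > n` contributes only `1`
to coefficients up to degree `n`, the product may be truncated at `k = n`. -/
noncomputable def pbar (n : ℕ) : ℤ :=
  PowerSeries.coeff (R := ℤ) n (∏ k ∈ Finset.Icc 1 n, fps k)

/-- The number of plane overpartitions of `n` with at most `K` rows: the coefficient
of `q^n` in `∏_{k≥1} ((1+q^k)/(1-q^k))^(min K k)`, truncated at `k = n`. -/
noncomputable def plbark (K n : ℕ) : ℤ :=
  PowerSeries.coeff (R := ℤ) n (∏ k ∈ Finset.Icc 1 n, fps k ^ min K k)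

/-! Since `(1 + q^j)/(1 - q^j) = 1 + 2q^j/(1 - q^j)`, modulo 4 every factor squares to `1`, and
any two series `x, y ≡ 1 (mod 2)` satisfy `xy ≡ x + y - 1`. So the `(2k+1)`-rowed product is
`≡ P·E ≡ P + E - 1 (mod 4)`, where `P` is the overpartition product and `E` the product of the
factors whose exponent `min(2k+1, j)` is even. Those `j` are even, so `E` is a series in `q²`
and has no odd coefficients. -/

open Finset

section CommMonoid

variable {ι M : Type*} [CommMonoid M]

theorem pow_eq_mul_ite_even_of_sq_eq_one {x : M} (hx : x ^ 2 = 1) (m : ℕ) :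
    x ^ m = x * if Even m then x else 1 := by
  rw [pow_eq_pow_mod m hx]
  rcases Nat.even_or_odd m with hm | hm
  · rw [Nat.even_iff.mp hm, if_pos hm, pow_zero, ← sq, hx]
  · rw [Nat.odd_iff.mp hm, if_neg (Nat.not_even_iff_odd.mpr hm), pow_one, mul_one]

theorem prod_pow_eq_prod_mul_prod_filter_even {s : Finset ι} {x : ι → M}
    (hx : ∀ i ∈ s, x i ^ 2 = 1) (m : ι → ℕ) :
    ∏ i ∈ s, x i ^ m i = (∏ i ∈ s, x i) * ∏ i ∈ s with Even (m i), x i := by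
  rw [prod_filter, ← prod_mul_distrib]
  exact prod_congr rfl fun i hi => pow_eq_mul_ite_even_of_sq_eq_one (hx i hi) (m i)

end CommMonoid

section CommRing

variable {ι R : Type*} [CommRing R]

theorem two_dvd_prod_sub_one {s : Finset ι} {f : ι → R} (hf : ∀ i ∈ s, 2 ∣ f i - 1) :
    2 ∣ ∏ i ∈ s, f i - 1 := by
  refine prod_induction f (fun x => 2 ∣ x - 1) (fun a b ha hb => ?_) (by simp) hf
  rw [show a * b - 1 = (a - 1) * b + (b - 1) by ring]
  exact dvd_add (dvd_mul_of_dvd_left ha b) hb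

theorem sq_eq_one_of_two_dvd_sub_one (h4 : (4 : R) = 0) {x : R} (hx : 2 ∣ x - 1) :
    x ^ 2 = 1 := by
  obtain ⟨a, ha⟩ := hx
  linear_combination (x + 1 + 2 * a) * ha + (a ^ 2 + a) * h4

theorem mul_eq_add_sub_one_of_two_dvd_sub_one (h4 : (4 : R) = 0) {x y : R} (hx : 2 ∣ x - 1)
    (hy : 2 ∣ y - 1) : x * y = x + y - 1 := by
  obtain ⟨a, ha⟩ := hx
  obtain ⟨b, hb⟩ := hy
  linear_combination (y - 1) * ha + 2 * a * hb + a * b * h4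

end CommRing

open PowerSeries

theorem coeff_eq_zero_of_rescale_neg_one_eq_self {R : Type*} [CommRing R] [NoZeroDivisors R]
    [CharZero R] {f : R⟦X⟧} (hf : rescale (-1) f = f) {n : ℕ} (hn : Odd n) : coeff n f = 0 := by
  have := congrArg (coeff n) hf
  rwa [coeff_rescale, hn.neg_one_pow, neg_one_mul, CharZero.neg_eq_self_iff] at this

theorem rescale_neg_one_X_pow_of_even {R : Type*} [CommRing R] {j : ℕ} (hj : Even j) :
    rescale (-1 : R) (X ^ j) = X ^ j := by
  rw [map_pow, rescale_X, mul_pow, ← map_pow, hj.neg_one_pow, map_one, one_mul]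

section fps

variable {j : ℕ}

theorem one_sub_X_pow_mul_invOfUnit (hj : j ≠ 0) :
    (1 - X ^ j : ℤ⟦X⟧) * invOfUnit (1 - X ^ j) 1 = 1 :=
  mul_invOfUnit _ _ (by simp [zero_pow hj])

theorem fps_sub_one (hj : j ≠ 0) : fps j - 1 = 2 * (X ^ j * invOfUnit (1 - X ^ j : ℤ⟦X⟧) 1) := by
  rw [fps]
  linear_combination one_sub_X_pow_mul_invOfUnit hj

theorem two_dvd_fps_sub_one (hj : j ≠ 0) : 2 ∣ fps j - 1 :=
  ⟨_, fps_sub_one hj⟩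

theorem map_fps_eq_of_map_X_pow_eq (σ : ℤ⟦X⟧ →+* ℤ⟦X⟧) (hσ : σ (X ^ j) = X ^ j) (hj : j ≠ 0) :
    σ (fps j) = fps j := by
  have hinv := one_sub_X_pow_mul_invOfUnit hj
  have hσinv : σ (invOfUnit (1 - X ^ j) 1) = invOfUnit (1 - X ^ j) 1 := by
    refine left_inv_eq_right_inv ?_ hinv
    simpa only [mul_comm, map_mul, map_sub, map_one, hσ] using congrArg σ hinv
  rw [fps, map_mul, map_add, map_one, hσ, hσinv]

end fps

theorem rescale_neg_one_prod_fps {s : Finset ℕ} (hs : ∀ j ∈ s, j ≠ 0 ∧ Even j) :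
    rescale (-1) (∏ j ∈ s, fps j) = ∏ j ∈ s, fps j := by
  rw [map_prod]
  exact prod_congr rfl fun j hj =>
    map_fps_eq_of_map_X_pow_eq _ (rescale_neg_one_X_pow_of_even (hs j hj).2) (hs j hj).1

theorem map_prod_fps_pow {R : Type*} [CommRing R] (h4 : (4 : R) = 0) (φ : ℤ⟦X⟧ →+* R)
    {s : Finset ℕ} (hs : 0 ∉ s) (m : ℕ → ℕ) :
    φ (∏ j ∈ s, fps j ^ m j) = φ (∏ j ∈ s, fps j) + φ (∏ j ∈ s with Even (m j), fps j) - 1 := by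
  have hfactor : ∀ j ∈ s, 2 ∣ φ (fps j) - 1 := fun j hj => by
    simpa only [map_sub, map_one, map_ofNat] using
      map_dvd φ (two_dvd_fps_sub_one (ne_of_mem_of_not_mem hj hs))
  simp only [map_prod, map_pow]
  rw [prod_pow_eq_prod_mul_prod_filter_even
      (fun j hj => sq_eq_one_of_two_dvd_sub_one h4 (hfactor j hj)),
    mul_eq_add_sub_one_of_two_dvd_sub_one h4 (two_dvd_prod_sub_one hfactor)
      (two_dvd_prod_sub_one fun j hj => hfactor j (mem_filter.mp hj).1)]

theorem coeff_prod_fps_filter_even_min {K N : ℕ} (hK : Odd K) (hN : Odd N) (s : Finset ℕ)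
    (hs : 0 ∉ s) : coeff N (∏ j ∈ s with Even (min K j), fps j) = 0 := by
  refine coeff_eq_zero_of_rescale_neg_one_eq_self (rescale_neg_one_prod_fps fun j hj => ?_) hN
  obtain ⟨hjs, hmin⟩ := mem_filter.mp hj
  refine ⟨ne_of_mem_of_not_mem hjs hs, ?_⟩
  rcases min_choice K j with h | h
  · exact absurd (h ▸ hmin) (Nat.not_even_iff_odd.mpr hK)
  · exact h ▸ hmin

/-- For all `k, n ≥ 0`, `pl̄_{2k+1}(2n+1) ≡ p̄(2n+1) (mod 4)`. -/
theorem plbark_odd_rows_congr_pbar (k n : ℕ) :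
    plbark (2 * k + 1) (2 * n + 1) ≡ pbar (2 * n + 1) [ZMOD 4] := by
  have h4 : (4 : (ZMod 4)⟦X⟧) = 0 := by
    rw [← map_ofNat (C (R := ZMod 4)) 4, show (4 : ZMod 4) = 0 from rfl, map_zero]
  have h0 : 0 ∉ Icc 1 (2 * n + 1) := by simp
  refine (ZMod.intCast_eq_intCast_iff _ _ 4).mp ?_
  rw [plbark, pbar]
  simp only [← eq_intCast (Int.castRingHom (ZMod 4)), ← coeff_map]
  rw [map_prod_fps_pow h4 _ h0, map_sub, map_add, coeff_map, coeff_map,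
    coeff_prod_fps_filter_even_min (odd_two_mul_add_one k) (odd_two_mul_add_one n) _ h0,
    map_zero, coeff_one, if_neg (by omega), add_zero, sub_zero]
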